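/- Let f_min, μ be real and σ > 0, and set z = (f_min - μ)/σ. Then ∫_{-∞}^{f_min} (f_min - f) · (1/√(2πσ²)) exp(-(f-μ)²/(2σ²)) df = (f_min - μ)·Φ(z) + σ·φ(z) = σ(zΦ(z) + φ(z)), where Φ and φ are the standard normal CDF and PDF. -/

import Mathlib

/-!
Writing `x = (f - μ) / σ`, the integrand is `(z - x) φ(x)`. Since `φ' = -x φ` and `Φ' = φ`, the
function `f ↦ σ (z Φ(x) + φ(x))` is an antiderivative of it, and it vanishes at `-∞`; its value
at `f = f_min`, where `x = z`, is `σ (z Φ(z) + φ(z))`.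
-/

open Real MeasureTheory Set Filter Topology ProbabilityTheory

theorem hasDerivAt_integral_Iic {E : Type*} [NormedAddCommGroup E] [NormedSpace ℝ E]
    [CompleteSpace E] {f : ℝ → E} {x : ℝ} (hf : Integrable f) (hx : ContinuousAt f x) :
    HasDerivAt (fun t => ∫ u in Iic t, f u) (f x) x := by
  have h := (intervalIntegral.integral_hasDerivAt_right hf.intervalIntegrable
    (hf.aestronglyMeasurable.stronglyMeasurableAtFilter) hx (a := x)).const_add
    (∫ u in Iic x, f u)
  refine h.congr_of_eventuallyEq (Eventually.of_forall fun t => ?_)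
  dsimp only
  rw [← intervalIntegral.integral_Iic_sub_Iic hf.integrableOn hf.integrableOn]
  abel

theorem HasDerivAt.const_mul_comp_sub_div {K : ℝ → ℝ} {k μ σ t : ℝ} (hσ : σ ≠ 0)
    (hK : HasDerivAt K k ((t - μ) / σ)) :
    HasDerivAt (fun s => σ * K ((s - μ) / σ)) k t := by
  have hu : HasDerivAt (fun s => (s - μ) / σ) (1 / σ) t :=
    (((hasDerivAt_id' t).sub_const μ).div_const σ).congr_deriv (by simp)
  exact ((hK.comp t hu).const_mul σ).congr_deriv (by field_simp)

theorem tendsto_sub_div_atBot {μ σ : ℝ} (hσ : 0 < σ) :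
    Tendsto (fun s => (s - μ) / σ) atBot atBot :=
  (tendsto_atBot_add_const_right _ (-μ) tendsto_id).atBot_div_const hσ

theorem hasDerivAt_gaussianPDFReal (μ : ℝ) (v : NNReal) (x : ℝ) :
    HasDerivAt (gaussianPDFReal μ v) (-((x - μ) / v) * gaussianPDFReal μ v x) x := by
  have hexponent : HasDerivAt (fun y => -(y - μ) ^ 2 / (2 * (v : ℝ))) (-((x - μ) / v)) x :=
    ((((hasDerivAt_id' x).sub_const μ).pow 2).neg.div_const _).congr_deriv (by push_cast; ring)
  rw [gaussianPDFReal_def]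
  exact (hexponent.exp.const_mul _).congr_deriv (by ring)

theorem tendsto_gaussianPDFReal_atBot (μ : ℝ) (v : NNReal) :
    Tendsto (gaussianPDFReal μ v) atBot (𝓝 0) := by
  rcases eq_or_ne v 0 with rfl | hv
  · exact tendsto_const_nhds.congr fun x => by simp
  have hsq : Tendsto (fun x => -(x - μ) ^ 2 / (2 * (v : ℝ))) atBot atBot := by
    refine Tendsto.atBot_div_const (by positivity) (tendsto_neg_atTop_atBot.comp ?_)
    refine ((tendsto_pow_atTop two_ne_zero).comp
      (tendsto_atTop_add_const_left _ μ tendsto_neg_atBot_atTop)).congr fun x => ?_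
    simp only [Function.comp]; ring
  simpa [gaussianPDFReal_def] using (tendsto_exp_atBot.comp hsq).const_mul (√(2 * π * v))⁻¹

theorem integrable_mul_gaussianPDFReal (μ : ℝ) (v : NNReal) :
    Integrable fun x => x * gaussianPDFReal μ v x := by
  rcases eq_or_ne v 0 with rfl | hv
  · simp
  have hcentered : Integrable fun x => (x - μ) * gaussianPDFReal μ v x := by
    have hb : 0 < (2 * (v : ℝ))⁻¹ := by positivity
    refine (((integrable_mul_exp_neg_mul_sq hb).const_mul (√(2 * π * v))⁻¹).comp_sub_right
      μ).congr (ae_of_all _ fun x => ?_)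
    simp only [gaussianPDFReal]
    ring_nf
  refine (hcentered.add ((integrable_gaussianPDFReal μ v).const_mul μ)).congr
    (ae_of_all _ fun x => ?_)
  simp only [Pi.add_apply]
  ring

theorem gaussianPDFReal_zero_one_sub_div {σ : ℝ} (hσ : 0 < σ) (μ x : ℝ) :
    gaussianPDFReal 0 1 ((x - μ) / σ) / σ
      = 1 / √(2 * π * σ ^ 2) * exp (-(x - μ) ^ 2 / (2 * σ ^ 2)) := by
  rw [sqrt_mul (by positivity), sqrt_sq hσ.le]
  simp only [gaussianPDFReal, NNReal.coe_one, mul_one, sub_zero, div_pow]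
  field_simp

theorem hasDerivAt_mul_integral_Iic_add_gaussianPDFReal (z x : ℝ) :
    HasDerivAt (fun y => z * (∫ u in Iic y, gaussianPDFReal 0 1 u) + gaussianPDFReal 0 1 y)
      ((z - x) * gaussianPDFReal 0 1 x) x := by
  have hpdf := hasDerivAt_gaussianPDFReal 0 1 x
  have hcdf := hasDerivAt_integral_Iic (integrable_gaussianPDFReal 0 1) hpdf.continuousAt
  refine ((hcdf.const_mul z).add hpdf).congr_deriv ?_
  simp only [sub_zero, NNReal.coe_one, div_one, neg_mul]
  ring

theorem tendsto_mul_integral_Iic_add_gaussianPDFReal_atBot (z : ℝ) :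
    Tendsto (fun y => z * (∫ u in Iic y, gaussianPDFReal 0 1 u) + gaussianPDFReal 0 1 y)
      atBot (𝓝 0) := by
  simpa using ((tendsto_integral_Iic_zero tendsto_id).const_mul z).add
    (tendsto_gaussianPDFReal_atBot 0 1)

/-- Closed form of the Expected Improvement: with φ, Φ the standard normal pdf and cdf and
z = (f_min - μ)/σ,
∫_{-∞}^{f_min} (f_min - f)·(1/√(2πσ²)) e^{-(f-μ)²/(2σ²)} df
  = (f_min - μ)Φ(z) + σφ(z) = σ(zΦ(z) + φ(z)). -/
theorem expected_improvement_closed_form (fmin μ σ : ℝ) (hσ : 0 < σ)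
    (φ : ℝ → ℝ) (hφ : ∀ x, φ x = (1 / Real.sqrt (2 * π)) * Real.exp (-x ^ 2 / 2))
    (Φ : ℝ → ℝ) (hΦ : ∀ x, Φ x = ∫ u in Set.Iic x, φ u)
    (z : ℝ) (hz : z = (fmin - μ) / σ) :
    (∫ f in Set.Iio fmin,
        (fmin - f) * ((1 / Real.sqrt (2 * π * σ ^ 2)) * Real.exp (-(f - μ) ^ 2 / (2 * σ ^ 2))))
      = (fmin - μ) * Φ z + σ * φ z ∧
    (fmin - μ) * Φ z + σ * φ z = σ * (z * Φ z + φ z) := by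
  obtain rfl : φ = gaussianPDFReal 0 1 := funext fun x => by simp [hφ, gaussianPDFReal]
  have hform : (fmin - μ) * Φ z + σ * gaussianPDFReal 0 1 z
      = σ * (z * Φ z + gaussianPDFReal 0 1 z) := by
    rw [hz]; field_simp
  refine ⟨?_, hform⟩
  have hintegrand (f : ℝ) :
      (fmin - f) * (1 / √(2 * π * σ ^ 2) * exp (-(f - μ) ^ 2 / (2 * σ ^ 2)))
        = (z - (f - μ) / σ) * gaussianPDFReal 0 1 ((f - μ) / σ) := by
    rw [← gaussianPDFReal_zero_one_sub_div hσ, hz]; field_simp; ring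
  have hint : Integrable fun f => (z - (f - μ) / σ) * gaussianPDFReal 0 1 ((f - μ) / σ) :=
    ((((integrable_gaussianPDFReal 0 1).const_mul z).sub (integrable_mul_gaussianPDFReal 0 1)
      ).comp_div hσ.ne').comp_sub_right μ |>.congr
        (ae_of_all _ fun f => by simp only [Pi.sub_apply]; ring)
  have hlim : Tendsto (fun f => σ * (z * (∫ u in Iic ((f - μ) / σ), gaussianPDFReal 0 1 u)
      + gaussianPDFReal 0 1 ((f - μ) / σ))) atBot (𝓝 0) := by
    simpa using ((tendsto_mul_integral_Iic_add_gaussianPDFReal_atBot z).comp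
      (tendsto_sub_div_atBot hσ)).const_mul σ
  simp_rw [hintegrand]
  rw [← integral_Iic_eq_integral_Iio, integral_Iic_of_hasDerivAt_of_tendsto'
    (fun f _ => (hasDerivAt_mul_integral_Iic_add_gaussianPDFReal z _).const_mul_comp_sub_div
      hσ.ne') hint.integrableOn hlim, hform, ← hz, hΦ, sub_zero]
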